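/- arXiv:1210.4217 — 5 statements merged into one kernel-verified Lean document; each statement's English description precedes it below -/
import Mathlib

section
/- For a prime ℓ ≥ 3 and an integer p, if ℓ does not divide p, then the polynomial f_p(x) = x^ℓ − ℓ(ℓp+1)x + (ℓ−1)(ℓp+1) satisfies that f_p(x+1) is Eisenstein at ℓ, hence f_p is irreducible over ℚ. -/
open Polynomial

theorem fp_eisenstein_and_irreducible (ℓ : ℕ) (hℓ : ℓ.Prime) (h3 : 3 ≤ ℓ)
    (p : ℤ) (hp : ¬ (ℓ : ℤ) ∣ p) :
    ((X ^ ℓ - C ((ℓ : ℤ) * (ℓ * p + 1)) * X + C (((ℓ : ℤ) - 1) * (ℓ * p + 1))).comp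
        (X + 1)).IsEisensteinAt (Ideal.span {(ℓ : ℤ)}) ∧
    Irreducible ((X ^ ℓ - C ((ℓ : ℤ) * (ℓ * p + 1)) * X + C (((ℓ : ℤ) - 1) * (ℓ * p + 1))).map
        (algebraMap ℤ ℚ)) := by
  set a : ℤ := (ℓ : ℤ) * (ℓ * p + 1) with ha
  set b : ℤ := ((ℓ : ℤ) - 1) * (ℓ * p + 1) with hb
  set f : ℤ[X] := X ^ ℓ - C a * X + C b with hf
  have hℓ0 : ℓ ≠ 0 := hℓ.ne_zero
  have hℓ1 : 1 < ℓ := hℓ.one_lt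
  have hfdeg : f.natDegree = ℓ := by
    rw [hf]
    compute_degree! <;> omega
  have hfmonic : f.Monic := by
    have : f = X ^ ℓ + (-(C a * X) + C b) := by ring
    rw [this]
    apply monic_X_pow_add
    have h1 : (-(C a * X) + C b).degree ≤ 1 := by
      apply le_trans (degree_add_le _ _)
      simp only [degree_neg, max_le_iff]
      refine ⟨le_trans (degree_C_mul_X_le a) le_rfl, le_trans degree_C_le (by norm_num)⟩
    refine lt_of_le_of_lt h1 ?_
    exact_mod_cast hℓ1
  set g : ℤ[X] := f.comp (X + 1) with hg
  have hgmonic : g.Monic := by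
    have : (X + 1 : ℤ[X]) = X + C 1 := by simp
    rw [hg, this]
    exact hfmonic.comp_X_add_C 1
  have hX1 : (X + 1 : ℤ[X]).natDegree = 1 := by
    rw [show (X + 1 : ℤ[X]) = X + C 1 by simp, natDegree_X_add_C]
  have hgdeg : g.natDegree = ℓ := by
    rw [hg, natDegree_comp, hfdeg, hX1, mul_one]
  -- coefficients of g
  have hgcoeff : ∀ n, g.coeff n = (ℓ.choose n : ℤ) - a * ((X + 1 : ℤ[X]).coeff n)
      + (if n = 0 then b else 0) := by
    intro n
    rw [hg, hf]
    simp only [add_comp, sub_comp, mul_comp, pow_comp, X_comp, C_comp, coeff_add, coeff_sub,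
      coeff_C_mul]
    rw [coeff_X_add_one_pow, coeff_C]
  have hcoeff0 : g.coeff 0 = -((ℓ : ℤ) * p) := by
    rw [hgcoeff]
    simp [ha, hb]
    ring
  have hmem : ∀ n, n < ℓ → (ℓ : ℤ) ∣ g.coeff n := by
    intro n hn
    rcases Nat.eq_zero_or_pos n with h0 | h0
    · subst h0; rw [hcoeff0]; exact dvd_neg.mpr ⟨p, rfl⟩
    rcases eq_or_lt_of_le (show 1 ≤ n from h0) with h1 | h1
    · have hn1 : n = 1 := by omega
      subst hn1
      rw [hgcoeff]
      have hx1 : (X + 1 : ℤ[X]).coeff 1 = 1 := by simp [coeff_one]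
      rw [hx1]
      refine ⟨1 - (ℓ * p + 1), ?_⟩
      simp only [if_neg (one_ne_zero), ha, Nat.choose_one_right]
      push_cast
      ring
    · rw [hgcoeff]
      have hx : (X + 1 : ℤ[X]).coeff n = 0 := by
        rw [coeff_add, coeff_X, coeff_one]
        have hn1 : n ≠ 1 := by omega
        have hn0 : n ≠ 0 := by omega
        simp [hn0, Ne.symm hn1]
      rw [hx]
      have hch : (ℓ : ℤ) ∣ (ℓ.choose n : ℤ) := by
        exact_mod_cast Int.natCast_dvd_natCast.mpr
          (Nat.Prime.dvd_choose_self hℓ (by omega) hn)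
      have : n ≠ 0 := by omega
      simpa [this] using hch
  have hEis : g.IsEisensteinAt (Ideal.span {(ℓ : ℤ)}) := by
    constructor
    · rw [hgmonic.leadingCoeff, Ideal.mem_span_singleton]
      intro h
      exact hℓ.one_lt.ne' (by exact_mod_cast Int.eq_one_of_dvd_one (by positivity) h)
    · intro n hn
      rw [Ideal.mem_span_singleton]
      exact hmem n (hgdeg ▸ hn)
    · rw [Ideal.span_singleton_pow, Ideal.mem_span_singleton, hcoeff0]
      intro h
      rw [dvd_neg] at h
      have : (ℓ : ℤ) * (ℓ : ℤ) ∣ (ℓ : ℤ) * p := by rwa [sq] at h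
      exact hp ((mul_dvd_mul_iff_left (by exact_mod_cast hℓ0 : (ℓ : ℤ) ≠ 0)).mp this)
  refine ⟨hEis, ?_⟩
  have hprime : (Ideal.span {(ℓ : ℤ)}).IsPrime := by
    rw [Ideal.span_singleton_prime (by exact_mod_cast hℓ0)]
    exact Int.prime_iff_natAbs_prime.mpr (by simpa using hℓ)
  have hgirr : Irreducible g := hEis.irreducible hprime hgmonic.isPrimitive
    (by rw [hgdeg]; omega)
  have hfirr : Irreducible f := by
    have : g = algEquivAevalXAddC (1 : ℤ) f := by
      show g = aeval (X + C 1) f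
      rw [← comp_eq_aeval, hg, map_one C]
    rw [this] at hgirr
    exact (MulEquiv.irreducible_iff (algEquivAevalXAddC (1 : ℤ)).toMulEquiv).mp hgirr
  exact (hfmonic.irreducible_iff_irreducible_map_fraction_map).mp hfirr
end

section
/- Let p be an odd prime and let G = D_p^{n−1} × C_p, where D_p = ⟨r_i, s_i⟩ is the dihedral group of order 2p with r_i of order p and s_i of order 2, and C_p = ⟨r_n⟩. Let H = ⟨r_1 r_n, r_2 r_n, …, r_{n−1} r_n⟩. Then every subgroup B of G with H < B ≤ G (strict containment) contains r_n. -/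
/-!
Every element of `B \ H` produces a nontrivial element `(1, z)` of `B` in the central factor
`C_p`, and since `C_p` has prime order, `(1, z)` generates it. If all coordinates of
`b ∈ B \ H` are rotations `r (a i)`, then `b` differs from `∏ (r_i r_n) ^ (a i) ∈ H` only in the
`C_p` factor. If some coordinate `k` is a reflection, then `⁅r_k r_n, b⁆ = r_k ^ 2`, so
`(r_k r_n) ^ 2 ⁅r_k r_n, b⁆⁻¹ = r_n ^ 2`, and `2 ≠ 0` in `ZMod p` because `p` is odd.
-/

open DihedralGroup
open scoped commutatorElement

theorem DihedralGroup.commutatorElement_r_sr {n : ℕ} (i j : ZMod n) :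
    ⁅r i, sr j⁆ = r (2 * i) := by
  simp only [commutatorElement_def, r_mul_sr, inv_r, sr_mul_r, inv_sr, sr_mul_sr]
  ring_nf

theorem Pi.commutatorElement_mulSingle_left {ι : Type*} [DecidableEq ι] {G : ι → Type*}
    [∀ i, Group (G i)] (k : ι) (x : G k) (f : ∀ i, G i) :
    ⁅Pi.mulSingle k x, f⁆ = Pi.mulSingle k ⁅x, f k⁆ := by
  funext t
  by_cases ht : t = k
  · subst ht
    simp [commutatorElement_def]
  · simp [commutatorElement_def, Pi.mulSingle_eq_of_ne ht]

theorem mk_one_mem_of_ne_one {M : Type*} [Group M] {p : ℕ} [Fact p.Prime]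
    {B : Subgroup (M × Multiplicative (ZMod p))} {z : Multiplicative (ZMod p)} (hz : z ≠ 1)
    (hzB : ((1 : M), z) ∈ B) (w : Multiplicative (ZMod p)) : ((1 : M), w) ∈ B := by
  have hcard : Nat.card (Multiplicative (ZMod p)) = p := by
    rw [Nat.card_eq_fintype_card, Fintype.card_multiplicative, ZMod.card]
  have hle : Subgroup.zpowers z ≤ B.comap (MonoidHom.inr M _) := Subgroup.zpowers_le.mpr hzB
  rw [zpowers_eq_top_of_prime_card hcard hz] at hle
  exact hle (Subgroup.mem_top w)

section RotationProducts

variable {p m : ℕ}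

/-- The element `r_i r_n` of `D_p ^ m × C_p`. -/
def rotProd (p : ℕ) (i : Fin m) : (Fin m → DihedralGroup p) × Multiplicative (ZMod p) :=
  (Pi.mulSingle i (r 1), Multiplicative.ofAdd 1)

/-- `a ↦ ∏ i, (r_i r_n) ^ (a i)`, on the abelian group of rotation exponents. -/
def rotationHom :
    Multiplicative (Fin m → ZMod p) →* (Fin m → DihedralGroup p) × Multiplicative (ZMod p) where
  toFun a := (fun i => r (a.toAdd i), Multiplicative.ofAdd (∑ i, a.toAdd i))
  map_one' := Prod.ext (funext fun _ => r_zero) (by simp)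
  map_mul' a b := Prod.ext (funext fun i => (r_mul_r _ _).symm)
    (by simp [Finset.sum_add_distrib])

theorem rotationHom_ofAdd_single (i : Fin m) :
    rotationHom (Multiplicative.ofAdd (Pi.single i 1)) = rotProd p i := by
  refine Prod.ext (funext fun t => ?_) ?_
  · by_cases ht : t = i
    · subst ht
      simp [rotationHom, rotProd]
    · simp [rotationHom, rotProd, ht, r_zero]
  · show Multiplicative.ofAdd (∑ t, Pi.single i (1 : ZMod p) t) = Multiplicative.ofAdd 1
    rw [Finset.sum_pi_single', if_pos (Finset.mem_univ i)]

theorem rotationHom_mem_closure [NeZero p] (a : Fin m → ZMod p) :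
    rotationHom (Multiplicative.ofAdd a) ∈ Subgroup.closure (Set.range (rotProd p)) := by
  set K := (Subgroup.closure (Set.range (rotProd p))).comap rotationHom
  have hsingle (i : Fin m) : Multiplicative.ofAdd (Pi.single i 1 : Fin m → ZMod p) ∈ K :=
    Subgroup.mem_comap.mpr (rotationHom_ofAdd_single i ▸ Subgroup.subset_closure ⟨i, rfl⟩)
  have hdecomp : Multiplicative.ofAdd a
      = ∏ i, Multiplicative.ofAdd (Pi.single i 1 : Fin m → ZMod p) ^ (a i).val := by
    apply Multiplicative.toAdd.injective
    simp only [toAdd_prod, toAdd_pow, toAdd_ofAdd]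
    simp only [← Pi.single_smul, nsmul_eq_mul, mul_one, ZMod.natCast_zmod_val,
      Finset.univ_sum_single]
  exact hdecomp ▸ Subgroup.prod_mem K fun i _ => K.pow_mem (hsingle i) _

theorem exists_mk_one_mem_of_forall_eq_r [NeZero p]
    {B : Subgroup ((Fin m → DihedralGroup p) × Multiplicative (ZMod p))}
    (hHB : Subgroup.closure (Set.range (rotProd p)) ≤ B)
    {b : (Fin m → DihedralGroup p) × Multiplicative (ZMod p)} (hbB : b ∈ B)
    (hbH : b ∉ Subgroup.closure (Set.range (rotProd p)))
    {a : Fin m → ZMod p} (ha : ∀ i, b.1 i = r (a i)) :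
    ∃ z ≠ 1, ((1 : Fin m → DihedralGroup p), z) ∈ B := by
  set h := rotationHom (Multiplicative.ofAdd a)
  have hhH := rotationHom_mem_closure a
  have hfst : (h⁻¹ * b).1 = 1 := by
    have : h.1 = b.1 := funext fun i => (ha i).symm
    simp [this]
  refine ⟨(h⁻¹ * b).2, fun hz => hbH ?_, ?_⟩
  · rwa [← inv_mul_eq_one.mp (Prod.ext hfst hz)]
  · rw [← hfst]
    exact B.mul_mem (B.inv_mem (hHB hhH)) hbB

theorem mk_two_mem_of_eq_sr {B : Subgroup ((Fin m → DihedralGroup p) × Multiplicative (ZMod p))}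
    (hHB : Subgroup.closure (Set.range (rotProd p)) ≤ B)
    {b : (Fin m → DihedralGroup p) × Multiplicative (ZMod p)} (hbB : b ∈ B)
    {k : Fin m} {j : ZMod p} (hbk : b.1 k = sr j) :
    ((1 : Fin m → DihedralGroup p), Multiplicative.ofAdd 2) ∈ B := by
  have hgB : rotProd p k ∈ B := hHB (Subgroup.subset_closure ⟨k, rfl⟩)
  have hcomm : ⁅rotProd p k, b⁆ = ((Pi.mulSingle k (r 2) : Fin m → DihedralGroup p), 1) := by
    refine Prod.ext ?_ ?_
    · show ⁅(Pi.mulSingle k (r 1) : Fin m → DihedralGroup p), b.1⁆ = _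
      rw [Pi.commutatorElement_mulSingle_left, hbk, commutatorElement_r_sr, mul_one]
    · simp [commutatorElement_def, rotProd]
  have hsq : rotProd p k ^ 2 =
      ((Pi.mulSingle k (r 2) : Fin m → DihedralGroup p), Multiplicative.ofAdd 2) := by
    simp [rotProd, ← Pi.mulSingle_pow, ← ofAdd_nsmul]
  have hcommB : ⁅rotProd p k, b⁆ ∈ B :=
    B.mul_mem (B.mul_mem (B.mul_mem hgB hbB) (B.inv_mem hgB)) (B.inv_mem hbB)
  have hmem := B.mul_mem (B.pow_mem hgB 2) (B.inv_mem hcommB)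
  rw [hcomm, hsq] at hmem
  simpa using hmem

end RotationProducts

theorem subgroup_strictly_above_H_contains_rn (p : ℕ) (hp : p.Prime) (hodd : Odd p) (m : ℕ)
    (H : Subgroup ((Fin m → DihedralGroup p) × Multiplicative (ZMod p)))
    (hH : H = Subgroup.closure (Set.range fun i : Fin m =>
      ((Pi.mulSingle i (DihedralGroup.r 1) : Fin m → DihedralGroup p),
        Multiplicative.ofAdd (1 : ZMod p))))
    (B : Subgroup ((Fin m → DihedralGroup p) × Multiplicative (ZMod p)))
    (hB : H < B) :
    ((1 : Fin m → DihedralGroup p), Multiplicative.ofAdd (1 : ZMod p)) ∈ B := by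
  have : Fact p.Prime := ⟨hp⟩
  change H = Subgroup.closure (Set.range (rotProd p)) at hH
  subst hH
  obtain ⟨b, hbB, hbH⟩ := SetLike.exists_of_lt hB
  suffices ∃ z ≠ 1, ((1 : Fin m → DihedralGroup p), z) ∈ B by
    obtain ⟨z, hz, hzB⟩ := this
    exact mk_one_mem_of_ne_one hz hzB _
  by_cases hrot : ∀ k, ∃ a, b.1 k = r a
  · choose a ha using hrot
    exact exists_mk_one_mem_of_forall_eq_r hB.le hbB hbH ha
  · push Not at hrot
    obtain ⟨k, hk⟩ := hrot
    obtain ⟨j, hj⟩ : ∃ j, b.1 k = sr j := by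
      cases hbk : b.1 k with
      | r a => exact absurd hbk (hk a)
      | sr j => exact ⟨j, rfl⟩
    have h2 : (2 : ZMod p) ≠ 0 :=
      Ring.two_ne_zero (by rw [ZMod.ringChar_zmod_n]; exact hodd.ne_two_of_dvd_nat dvd_rfl)
    exact ⟨Multiplicative.ofAdd 2, by simpa using h2, mk_two_mem_of_eq_sr hB.le hbB hj⟩
end

section
/- With G = D_p^{n−1} × C_p and H = ⟨r_1 r_n, …, r_{n−1} r_n⟩ as above (p an odd prime), the intersection of all subgroups B with H < B ≤ G strictly contains H. -/
/-!
The subgroup `H` is the image of `a ↦ ((r (a i))ᵢ, ∑ᵢ a i)`, so it consists of rotations and meets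
the central factor `C_p = 1 × Multiplicative (ZMod p)` trivially. Let `B > H`. If some `x ∈ B` has a
reflection in coordinate `i`, then with the generator `g` of `H` at `i` the element `x g x⁻¹ g` is
`2 ∈ C_p`; otherwise every `x ∈ B` is `h · c` with `h ∈ H` and `c ∈ B ∩ C_p`. Either way
`B ∩ C_p ≠ 1`, so `C_p ≤ B` because `p` is prime, while `C_p ⊓ H = 1`.
-/

open DihedralGroup Multiplicative

section

variable {ι : Type*} {n : ℕ}

lemma conj_mul_eq_inr_two_of_fst_eq_sr [DecidableEq ι]
    {x : (ι → DihedralGroup n) × Multiplicative (ZMod n)} {i : ι} {b : ZMod n}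
    (hx : x.1 i = sr b) :
    x * (Pi.mulSingle i (r 1), ofAdd 1) * x⁻¹ * (Pi.mulSingle i (r 1), ofAdd 1) =
      MonoidHom.inr _ _ (ofAdd 2) := by
  ext j
  · rcases eq_or_ne j i with rfl | hj
    · simp [hx]
    · simp [hj]
  · simp [mul_comm x.2, one_add_one_eq_two]

variable (ι n) [Fintype ι]

def rotSumHom :
    Multiplicative (ι → ZMod n) →* (ι → DihedralGroup n) × Multiplicative (ZMod n) where
  toFun a := (fun i => r (toAdd a i), ofAdd (∑ i, toAdd a i))
  map_one' := by ext <;> simp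
  map_mul' a b := by ext <;> simp [Finset.sum_add_distrib]

variable {ι n}

@[simp]
lemma rotSumHom_apply (a : Multiplicative (ι → ZMod n)) :
    rotSumHom ι n a = (fun i => r (toAdd a i), ofAdd (∑ i, toAdd a i)) := rfl

lemma inr_mem_range_rotSumHom_iff {c : Multiplicative (ZMod n)} :
    MonoidHom.inr _ _ c ∈ (rotSumHom ι n).range ↔ c = 1 := by
  refine ⟨fun ⟨a, ha⟩ => ?_, fun hc => hc ▸ one_mem _⟩
  have ha0 : toAdd a = 0 := funext fun i => by
    have hi : r (toAdd a i) = r 0 := congr_fun (congr_arg Prod.fst ha) i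
    exact r.inj hi
  simpa [ha0] using (congr_arg Prod.snd ha).symm

variable [DecidableEq ι]

lemma rotSumHom_ofAdd_single_one (i : ι) :
    rotSumHom ι n (ofAdd (Pi.single i 1)) = (Pi.mulSingle i (r 1), ofAdd 1) := by
  ext j
  · rcases eq_or_ne j i with rfl | hj
    · simp
    · simp [hj]
  · simp

lemma closure_range_eq_range_rotSumHom :
    Subgroup.closure (Set.range fun i : ι =>
      ((Pi.mulSingle i (r 1) : ι → DihedralGroup n), ofAdd (1 : ZMod n))) =
      (rotSumHom ι n).range := by
  refine le_antisymm (Subgroup.closure_le _ |>.2 ?_) ?_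
  · rintro _ ⟨i, rfl⟩
    exact ⟨_, rotSumHom_ofAdd_single_one i⟩
  · rintro _ ⟨a, rfl⟩
    rw [← ofAdd_toAdd a]
    induction toAdd a using Pi.single_induction with
    | zero => simpa only [ofAdd_zero, map_one] using one_mem _
    | add a b ha hb => simpa only [ofAdd_add, map_mul] using mul_mem ha hb
    | single i c =>
      have hc : ofAdd (Pi.single i c) = ofAdd (Pi.single i 1 : ι → ZMod n) ^ (c.cast : ℤ) := by
        rw [← ofAdd_zsmul, ← Pi.single_smul, zsmul_one, ZMod.intCast_zmod_cast]
      rw [hc, map_zpow, rotSumHom_ofAdd_single_one]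
      exact zpow_mem (Subgroup.subset_closure (Set.mem_range_self i)) _

lemma le_range_rotSumHom_of_comap_inr_eq_bot (h2 : (2 : ZMod n) ≠ 0)
    {B : Subgroup ((ι → DihedralGroup n) × Multiplicative (ZMod n))}
    (hB : (rotSumHom ι n).range ≤ B) (hinr : B.comap (MonoidHom.inr _ _) = ⊥) :
    B ≤ (rotSumHom ι n).range := by
  intro x hx
  have hrot : ∀ i, ∃ a, x.1 i = r a := by
    intro i
    cases h : x.1 i with
    | r a => exact ⟨a, rfl⟩
    | sr b =>
      have hgen : ((Pi.mulSingle i (r 1), ofAdd 1) : (ι → DihedralGroup n) × _) ∈ B :=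
        hB ⟨_, rotSumHom_ofAdd_single_one i⟩
      have h2B : ofAdd (2 : ZMod n) ∈ B.comap (MonoidHom.inr _ _) := by
        rw [Subgroup.mem_comap, ← conj_mul_eq_inr_two_of_fst_eq_sr h]
        exact mul_mem (mul_mem (mul_mem hx hgen) (inv_mem hx)) hgen
      rw [hinr, Subgroup.mem_bot, ofAdd_eq_one] at h2B
      exact absurd h2B h2
  choose a ha using hrot
  set y := x * (rotSumHom ι n (ofAdd a))⁻¹
  have hy : y = MonoidHom.inr _ _ y.2 := Prod.ext (funext fun i => by simp [y, ha]) rfl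
  have hyB : y.2 ∈ B.comap (MonoidHom.inr _ _) := by
    rw [Subgroup.mem_comap, ← hy]
    exact mul_mem hx (inv_mem (hB ⟨_, rfl⟩))
  rw [hinr, Subgroup.mem_bot] at hyB
  rw [hyB, map_one, mul_inv_eq_one] at hy
  exact ⟨_, hy.symm⟩

end

theorem inf_of_subgroups_strictly_above_H (p : ℕ) (hp : p.Prime) (hodd : Odd p) (m : ℕ)
    (H : Subgroup ((Fin m → DihedralGroup p) × Multiplicative (ZMod p)))
    (hH : H = Subgroup.closure (Set.range fun i : Fin m =>
      ((Pi.mulSingle i (DihedralGroup.r 1) : Fin m → DihedralGroup p),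
        Multiplicative.ofAdd (1 : ZMod p)))) :
    H < sInf {B : Subgroup ((Fin m → DihedralGroup p) × Multiplicative (ZMod p)) | H < B} := by
  have : Fact p.Prime := ⟨hp⟩
  have : Fact (Nat.card (Multiplicative (ZMod p))).Prime := ⟨(Nat.card_zmod p).symm ▸ hp⟩
  have h2 : (2 : ZMod p) ≠ 0 := Ring.two_ne_zero <| by
    rw [ZMod.ringChar_zmod_n]
    rintro rfl
    exact Nat.not_even_iff_odd.2 hodd even_two
  rw [closure_range_eq_range_rotSumHom] at hH
  subst hH
  refine SetLike.lt_iff_le_and_exists.2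
    ⟨le_sInf fun B hB => hB.le, MonoidHom.inr _ _ (ofAdd 1), ?_, ?_⟩
  · refine Subgroup.mem_sInf.2 fun B hB => ?_
    have hinr : B.comap (MonoidHom.inr _ _) = ⊤ :=
      (Subgroup.eq_bot_or_eq_top_of_prime_card _).resolve_left fun hbot =>
        hB.not_ge (le_range_rotSumHom_of_comap_inr_eq_bot h2 hB.le hbot)
    exact Subgroup.mem_comap.1 (hinr ▸ Subgroup.mem_top _)
  · rw [inr_mem_range_rotSumHom_iff, ofAdd_eq_one]
    exact one_ne_zero
end

section
/- Let p and q be primes with q ≡ 1 (mod p). Then there exists a transitive permutation group of degree pq isomorphic to the semidirect product C_q^p ⋊ H_p, where H_p is the Heisenberg group of order p³ acting on C_q^p as constructed from a (q−1)-cycle normalizing a q-cycle. -/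
/-- The Heisenberg group of upper unitriangular 3×3 matrices
`[[1, a, c], [0, 1, b], [0, 0, 1]]` over `ZMod p`. -/
@[ext]
structure Heisenberg (p : ℕ) where
  a : ZMod p
  b : ZMod p
  c : ZMod p

namespace Heisenberg

variable {p : ℕ}

instance : Mul (Heisenberg p) :=
  ⟨fun g h => ⟨g.a + h.a, g.b + h.b, g.c + h.c + g.a * h.b⟩⟩

instance : One (Heisenberg p) := ⟨⟨0, 0, 0⟩⟩

instance : Inv (Heisenberg p) := ⟨fun g => ⟨-g.a, -g.b, -g.c + g.a * g.b⟩⟩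

@[simp] lemma mul_def (g h : Heisenberg p) :
    g * h = ⟨g.a + h.a, g.b + h.b, g.c + h.c + g.a * h.b⟩ := rfl

@[simp] lemma one_def : (1 : Heisenberg p) = ⟨0, 0, 0⟩ := rfl

@[simp] lemma inv_def (g : Heisenberg p) : g⁻¹ = ⟨-g.a, -g.b, -g.c + g.a * g.b⟩ := rfl

instance : Group (Heisenberg p) where
  mul_assoc g h k := by ext <;> simp <;> ring
  one_mul g := by ext <;> simp
  mul_one g := by ext <;> simp
  inv_mul_cancel g := by ext <;> simp

end Heisenberg

namespace PQAux


variable {p q : ℕ} [NeZero p]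

/-- The canonical bijection `ZMod p → Fin p`. -/
def ind (z : ZMod p) : Fin p := ⟨z.val, z.val_lt⟩

@[simp] lemma natCast_ind (z : ZMod p) : (((ind z : Fin p) : ℕ) : ZMod p) = z := by
  simp [ind, ZMod.natCast_val, ZMod.cast_id]

@[simp] lemma ind_natCast (x : Fin p) : ind (((x : ℕ) : ZMod p)) = x := by
  ext
  simp [ind, ZMod.val_natCast, Nat.mod_eq_of_lt x.isLt]

lemma ind_injective : Function.Injective (ind (p := p)) := by
  intro a b h
  have := congrArg (fun x : Fin p => (((x : ℕ) : ZMod p))) h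
  simpa using this

/-- Shift of `Fin p` by an element of `ZMod p`. -/
def sh (a : ZMod p) (x : Fin p) : Fin p := ind (((x : ℕ) : ZMod p) + a)

@[simp] lemma natCast_sh (a : ZMod p) (x : Fin p) :
    (((sh a x : Fin p) : ℕ) : ZMod p) = ((x : ℕ) : ZMod p) + a := by
  simp [sh]

@[simp] lemma sh_sh (a b : ZMod p) (x : Fin p) : sh a (sh b x) = sh (b + a) x := by
  simp [sh, add_assoc]

@[simp] lemma sh_zero (x : Fin p) : sh 0 x = x := by
  simp [sh]

variable (ζ : (ZMod q)ˣ)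

/-- The character `ZMod p → (ZMod q)ˣ` sending `e` to `ζ ^ e`. -/
def χ (e : ZMod p) : (ZMod q)ˣ := ζ ^ e.val

@[simp] lemma χ_zero : χ ζ (0 : ZMod p) = 1 := by
  simp [χ]

lemma χ_add (hζ : orderOf ζ = p) (m n : ZMod p) :
    χ ζ (m + n) = χ ζ m * χ ζ n := by
  unfold χ
  have h2 := pow_mod_orderOf ζ (m.val + n.val)
  rw [hζ] at h2
  rw [ZMod.val_add, h2, pow_add]

lemma χ_eq_zero_of_eq_one (hζ : orderOf ζ = p) {e : ZMod p} (h : χ ζ e = 1) : e = 0 := by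
  unfold χ at h
  have hd := orderOf_dvd_of_pow_eq_one h
  rw [hζ] at hd
  have h0 : e.val = 0 := Nat.eq_zero_of_dvd_of_lt hd e.val_lt
  exact (ZMod.val_eq_zero e).mp h0


variable {p q : ℕ} [NeZero p] (ζ : (ZMod q)ˣ)

open Multiplicative

/-- The underlying monoid hom of the automorphism `φ g`. -/
def ψaux (g : Heisenberg p) :
    (Fin p → Multiplicative (ZMod q)) →* (Fin p → Multiplicative (ZMod q)) where
  toFun v x := ofAdd (((χ ζ (g.b * ((x : ℕ) : ZMod p) + g.c) : (ZMod q)ˣ) : ZMod q) *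
    toAdd (v (sh g.a x)))
  map_one' := by funext x; simp
  map_mul' v w := by funext x; simp [mul_add, ofAdd_add]

lemma ψaux_one : ψaux (q := q) ζ (1 : Heisenberg p) = MonoidHom.id _ := by
  ext v x
  simp [ψaux]

lemma ψaux_mul (hζ : orderOf ζ = p) (g h : Heisenberg p) (v : Fin p → Multiplicative (ZMod q)) :
    ψaux ζ (g * h) v = ψaux ζ g (ψaux ζ h v) := by
  funext x
  simp only [ψaux, Heisenberg.mul_def, MonoidHom.coe_mk, OneHom.coe_mk, toAdd_ofAdd, sh_sh,
    natCast_sh]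
  rw [← mul_assoc, ← Units.val_mul, ← χ_add ζ hζ]
  ring_nf

/-- The action of the Heisenberg group on `C_q^p`. -/
def φaux (hζ : orderOf ζ = p) :
    Heisenberg p →* MulAut (Fin p → Multiplicative (ZMod q)) where
  toFun g :=
    { toFun := ψaux ζ g
      invFun := ψaux ζ g⁻¹
      left_inv := fun v => by
        rw [← ψaux_mul ζ hζ, inv_mul_cancel, ψaux_one]; rfl
      right_inv := fun v => by
        rw [← ψaux_mul ζ hζ, mul_inv_cancel, ψaux_one]; rfl
      map_mul' := (ψaux ζ g).map_mul }
  map_one' := by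
    ext v x
    have := ψaux_one (p := p) (q := q) ζ
    simp only [MulEquiv.coe_mk, Equiv.coe_fn_mk, this]
    rfl
  map_mul' g h := by
    ext v x
    have := ψaux_mul ζ hζ g h v
    simp only [MulEquiv.coe_mk, Equiv.coe_fn_mk, this]
    rfl

/-- Translation part of the permutation action. -/
def f₁ : (Fin p → Multiplicative (ZMod q)) →* Equiv.Perm (Fin p × ZMod q) where
  toFun v :=
    { toFun := fun w => (w.1, w.2 + toAdd (v w.1))
      invFun := fun w => (w.1, w.2 - toAdd (v w.1))
      left_inv := fun w => by simp
      right_inv := fun w => by simp }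
  map_one' := by
    ext w
    · simp
    · simp
  map_mul' v w := by
    ext z
    · simp [Equiv.Perm.mul_apply]
    · simp [Equiv.Perm.mul_apply]
      ring

/-- The permutation induced by an element of the Heisenberg group. -/
def f₂equiv (g : Heisenberg p) : Equiv.Perm (Fin p × ZMod q) where
  toFun w := (sh (-g.a) w.1,
    ((χ ζ (g.b * ((w.1 : ℕ) : ZMod p) - g.a * g.b + g.c) : (ZMod q)ˣ) : ZMod q) * w.2)
  invFun w := (sh g.a w.1,
    (((χ ζ (g.b * ((w.1 : ℕ) : ZMod p) + g.c))⁻¹ : (ZMod q)ˣ) : ZMod q) * w.2)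
  left_inv w := by
    obtain ⟨x, y⟩ := w
    simp only [natCast_sh, sh_sh, neg_add_cancel, sh_zero]
    refine Prod.ext rfl ?_
    simp only [← mul_assoc, ← Units.val_mul]
    rw [show g.b * (((x : ℕ) : ZMod p) + -g.a) + g.c
        = g.b * ((x : ℕ) : ZMod p) - g.a * g.b + g.c by ring]
    simp
  right_inv w := by
    obtain ⟨x, y⟩ := w
    simp only [natCast_sh, sh_sh, add_neg_cancel, sh_zero]
    refine Prod.ext rfl ?_
    simp only [← mul_assoc, ← Units.val_mul]
    rw [show g.b * (((x : ℕ) : ZMod p) + g.a) - g.a * g.b + g.c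
        = g.b * ((x : ℕ) : ZMod p) + g.c by ring]
    simp

lemma f₂equiv_mul (hζ : orderOf ζ = p) (g h : Heisenberg p) :
    f₂equiv (q := q) ζ (g * h) = f₂equiv ζ g * f₂equiv ζ h := by
  ext w
  · simp [f₂equiv, Equiv.Perm.mul_apply, add_comm]
  · obtain ⟨x, y⟩ := w
    simp only [f₂equiv, Heisenberg.mul_def, Equiv.Perm.mul_apply, Equiv.coe_fn_mk, natCast_sh]
    simp only [← mul_assoc, ← Units.val_mul, ← χ_add ζ hζ]
    congr 2
    ring

/-- The Heisenberg part of the permutation action. -/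
def f₂ (hζ : orderOf ζ = p) : Heisenberg p →* Equiv.Perm (Fin p × ZMod q) where
  toFun := f₂equiv ζ
  map_one' := by
    ext w
    · simp [f₂equiv]
    · simp [f₂equiv]
  map_mul' := f₂equiv_mul ζ hζ

lemma compat (hζ : orderOf ζ = p) (g : Heisenberg p) :
    (f₁ (p := p) (q := q)).comp ((φaux ζ hζ g).toMonoidHom) =
      (MulAut.conj (f₂ ζ hζ g)).toMonoidHom.comp f₁ := by
  ext v w
  · simp only [MonoidHom.comp_apply, MulEquiv.coe_toMonoidHom, MulAut.conj_apply,
      Equiv.Perm.mul_apply, f₁, f₂, f₂equiv, φaux, ψaux, MulEquiv.coe_mk, Equiv.coe_fn_mk,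
      MonoidHom.coe_mk, OneHom.coe_mk, Equiv.Perm.inv_def, Equiv.coe_fn_symm_mk, sh_sh, natCast_sh,
      add_neg_cancel, sh_zero]
  · obtain ⟨x, y⟩ := w
    simp only [MonoidHom.comp_apply, MulEquiv.coe_toMonoidHom, MulAut.conj_apply,
      Equiv.Perm.mul_apply, f₁, f₂, f₂equiv, φaux, ψaux, MulEquiv.coe_mk, Equiv.coe_fn_mk,
      MonoidHom.coe_mk, OneHom.coe_mk, Equiv.Perm.inv_def, Equiv.coe_fn_symm_mk, sh_sh, natCast_sh,
      add_neg_cancel, sh_zero, toAdd_ofAdd]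
    rw [show g.b * (((x : ℕ) : ZMod p) + g.a) - g.a * g.b + g.c
        = g.b * ((x : ℕ) : ZMod p) + g.c by ring]
    rw [mul_add, ← mul_assoc, ← Units.val_mul, mul_inv_cancel]
    simp [add_comm]

/-- The permutation representation of the semidirect product. -/
def π (hζ : orderOf ζ = p) :
    SemidirectProduct (Fin p → Multiplicative (ZMod q)) (Heisenberg p) (φaux ζ hζ) →*
      Equiv.Perm (Fin p × ZMod q) :=
  SemidirectProduct.lift f₁ (f₂ ζ hζ) (compat ζ hζ)

lemma π_apply (hζ : orderOf ζ = p) (v : Fin p → Multiplicative (ZMod q)) (g : Heisenberg p)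
    (w : Fin p × ZMod q) :
    π ζ hζ ⟨v, g⟩ w = (sh (-g.a) w.1,
      ((χ ζ (g.b * ((w.1 : ℕ) : ZMod p) - g.a * g.b + g.c) : (ZMod q)ˣ) : ZMod q) * w.2 +
        toAdd (v (sh (-g.a) w.1))) := by
  rfl

lemma π_inj (hζ : orderOf ζ = p) : Function.Injective (π (q := q) ζ hζ) := by
  rw [injective_iff_map_eq_one]
  rintro ⟨v, g⟩ h
  have hpt : ∀ w : Fin p × ZMod q, π ζ hζ ⟨v, g⟩ w = w := fun w => by rw [h]; rfl
  have ha : g.a = 0 := by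
    have h0 := congrArg Prod.fst (hpt (ind 0, 0))
    rw [π_apply] at h0
    simp only [sh, natCast_ind, zero_add] at h0
    have := ind_injective (h0.trans (by simp [ind] : ind (0 : ZMod p) = ind 0))
    simpa [neg_eq_zero] using this
  have hv : v = 1 := by
    funext x
    have h0 := congrArg Prod.snd (hpt (x, 0))
    rw [π_apply, ha] at h0
    simp only [neg_zero, sh_zero, mul_zero, zero_add] at h0
    exact h0
  have hunit : ∀ x : Fin p, χ ζ (g.b * ((x : ℕ) : ZMod p) + g.c) = 1 := by
    intro x
    have h0 := congrArg Prod.snd (hpt (x, 1))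
    rw [π_apply, ha, hv] at h0
    simp only [neg_zero, sh_zero, mul_one, Pi.one_apply, toAdd_one, add_zero, zero_mul,
      sub_zero] at h0
    exact Units.ext (by simpa using h0)
  have hc : g.c = 0 := by
    have := χ_eq_zero_of_eq_one ζ hζ (hunit (ind 0))
    simpa using this
  have hb : g.b = 0 := by
    have := χ_eq_zero_of_eq_one ζ hζ (hunit (ind 1))
    rw [hc] at this
    simpa using this
  ext
  · rw [hv]; rfl
  · exact ha
  · exact hb
  · exact hc

lemma π_trans (hζ : orderOf ζ = p) (w w' : Fin p × ZMod q) :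
    ∃ s, π ζ hζ s w = w' := by
  obtain ⟨x, y⟩ := w
  obtain ⟨x', y'⟩ := w'
  refine ⟨⟨fun _ => ofAdd (y' - y), ⟨((x : ℕ) : ZMod p) - ((x' : ℕ) : ZMod p), 0, 0⟩⟩, ?_⟩
  rw [π_apply]
  simp only [zero_mul, zero_add, mul_zero, sub_zero, neg_sub, χ_zero, Units.val_one, one_mul,
    toAdd_ofAdd, sh, natCast_ind]
  rw [show ((x : ℕ) : ZMod p) + (((x' : ℕ) : ZMod p) - ((x : ℕ) : ZMod p))
      = ((x' : ℕ) : ZMod p) by ring]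
  rw [ind_natCast]
  rw [show y + (y' - y) = y' by ring]

/-- `Equiv.permCongr` as a `MulEquiv`. -/
def permCongrMul {α β : Type*} (e : α ≃ β) : Equiv.Perm α ≃* Equiv.Perm β :=
  { Equiv.permCongr e with
    map_mul' := fun σ τ => Equiv.ext fun b => by
      simp [Equiv.permCongr_apply, Equiv.Perm.mul_apply] }

end PQAux

theorem exists_transitive_group_of_degree_pq (p q : ℕ) (hp : p.Prime) (hq : q.Prime)
    (hcong : q % p = 1) :
    ∃ (G : Subgroup (Equiv.Perm (Fin (p * q))))
      (φ : Heisenberg p →* MulAut (Fin p → Multiplicative (ZMod q))),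
      (∀ x y : Fin (p * q), ∃ g ∈ G, g x = y) ∧
      Nonempty
        (G ≃* SemidirectProduct (Fin p → Multiplicative (ZMod q)) (Heisenberg p) φ) := by
  haveI : Fact p.Prime := ⟨hp⟩
  haveI : Fact q.Prime := ⟨hq⟩
  haveI : NeZero p := ⟨hp.pos.ne'⟩
  haveI : NeZero q := ⟨hq.pos.ne'⟩
  have hdvd : p ∣ Fintype.card (ZMod q)ˣ := by
    have h := Nat.div_add_mod q p
    rw [hcong] at h
    rw [ZMod.card_units_eq_totient, Nat.totient_prime hq]
    refine ⟨q / p, ?_⟩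
    set k := p * (q / p) with hk
    omega
  obtain ⟨ζ, hζ⟩ := exists_prime_orderOf_dvd_card p hdvd
  let π := PQAux.π ζ hζ
  let e1 : ZMod q ≃ Fin q := Fintype.equivFinOfCardEq (ZMod.card q)
  let eΩ : (Fin p × ZMod q) ≃ Fin (p * q) :=
    ((Equiv.refl (Fin p)).prodCongr e1).trans finProdFinEquiv
  let Θ := PQAux.permCongrMul eΩ
  let π' := Θ.toMonoidHom.comp π
  have hinj : Function.Injective π' := Θ.injective.comp (PQAux.π_inj ζ hζ)
  refine ⟨π'.range, PQAux.φaux ζ hζ, ?_, ⟨(MonoidHom.ofInjective hinj).symm⟩⟩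
  intro x y
  obtain ⟨s, hs⟩ := PQAux.π_trans ζ hζ (eΩ.symm x) (eΩ.symm y)
  refine ⟨π' s, ⟨s, rfl⟩, ?_⟩
  show Θ (π s) x = y
  rw [show (Θ (π s) : Equiv.Perm (Fin (p * q))) = eΩ.permCongr (π s) from rfl,
    Equiv.permCongr_apply, hs, Equiv.apply_symm_apply]
end

section
/- Let p be a prime and G a transitive subgroup of S_p. Then G has a unique minimal normal subgroup T, T is simple and acts transitively on the p points, and G/T is cyclic of order dividing p−1; equivalently G = T ⋊ B with B ≤ C_{p−1}. -/
/-!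
Every nontrivial normal subgroup of a transitive group `G` of prime degree `p` is transitive
(`G` is primitive), so `p` divides its order; since `G` embeds in `S_p`, `p²` does not divide
`|G|`, so such a subgroup contains every `p`-subgroup of `G`. Hence the subgroup `T` generated by
the elements of order `p` lies in every nontrivial normal subgroup, and the same argument inside
`T`, again transitive of degree `p`, shows that `T` is simple. A Sylow `p`-subgroup `P` has
order `p` and, being abelian and transitive, is its own centralizer. The Frattini argument
`G = N_G(P) T` then exhibits `G / T` as a quotient of `N_G(P) / C_G(P) ≤ Aut P ≅ C_{p-1}`.
-/

open MulAction Subgroup Pointwise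

namespace Subgroup

variable {G : Type*} [Group G]

theorem le_of_isPGroup_of_not_dvd_index [Finite G] {p : ℕ} [Fact p.Prime] {P H : Subgroup G}
    [H.Normal] (hP : IsPGroup p P) (hH : ¬p ∣ H.index) : P ≤ H := by
  obtain ⟨k, hk⟩ := hP.exists_card_eq
  have hcop : (Nat.card P).Coprime H.index :=
    hk ▸ ((Nat.Prime.coprime_iff_not_dvd Fact.out).2 hH).pow_left k
  rw [← relIndex_eq_one]
  exact Nat.eq_one_of_dvd_coprimes hcop (relIndex_dvd_card H P) (H.relIndex_dvd_index_of_normal P)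

theorem surjective_mk'_comp_subtype_of_sup_eq_top {H N : Subgroup G} [N.Normal]
    (h : H ⊔ N = ⊤) : Function.Surjective ((QuotientGroup.mk' N).comp H.subtype) := by
  intro q
  obtain ⟨g, rfl⟩ := QuotientGroup.mk'_surjective N q
  have hg : g ∈ (H : Set G) * (N : Set G) := by rw [← mul_normal, h]; trivial
  obtain ⟨a, ha, b, hb, rfl⟩ := hg
  exact ⟨⟨a, ha⟩, (QuotientGroup.mk'_eq_mk' N).2 ⟨b, hb, rfl⟩⟩

theorem normalClosure_setOf_pow_eq_one (n : ℕ) :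
    normalClosure {g : G | g ^ n = 1} = closure {g : G | g ^ n = 1} := by
  refine le_antisymm (closure_mono fun g hg => ?_) (closure_mono Group.subset_conjugatesOfSet)
  obtain ⟨a, ha, hconj⟩ := Group.mem_conjugatesOfSet_iff.1 hg
  have hpow := hconj.pow n
  rw [show a ^ n = 1 from ha, isConj_one_right] at hpow
  exact hpow

instance normal_closure_setOf_pow_eq_one (n : ℕ) : (closure {g : G | g ^ n = 1}).Normal :=
  normalClosure_setOf_pow_eq_one (G := G) n ▸ normalClosure_normal

end Subgroup

theorem Sylow.card_eq_of_not_sq_dvd {G : Type*} [Group G] [Finite G] {p : ℕ} [hp : Fact p.Prime]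
    (S : Sylow p G) (hdvd : p ∣ Nat.card G) (hsq : ¬p ^ 2 ∣ Nat.card G) : Nat.card S = p := by
  obtain ⟨k, hk⟩ := S.isPGroup'.exists_card_eq
  have hpS := S.dvd_card_of_dvd_card hdvd
  rcases k with _ | _ | k
  · rw [hk, pow_zero] at hpS
    exact absurd hpS hp.out.not_dvd_one
  · rwa [pow_one] at hk
  · have hS := card_subgroup_dvd_card (S : Subgroup G)
    rw [hk] at hS
    exact absurd ((pow_dvd_pow p (Nat.le_add_left 2 k)).trans hS) hsq

theorem isCyclic_mulAut_of_prime_card {H : Type*} [Group H] (hH : (Nat.card H).Prime) :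
    IsCyclic (MulAut H) := by
  have : Fact (Nat.card H).Prime := ⟨hH⟩
  have : IsCyclic H := isCyclic_of_prime_card rfl
  exact isCyclic_of_surjective (IsCyclic.mulAutMulEquiv H).symm.toMonoidHom (MulEquiv.surjective _)

theorem MonoidHom.isCyclic_and_card_dvd_of_ker_le {A B C : Type*} [Group A] [Group B] [Group C]
    [IsCyclic C] [Finite C] {f : A →* B} {g : A →* C} (hf : Function.Surjective f)
    (hker : g.ker ≤ f.ker) : IsCyclic B ∧ Nat.card B ∣ Nat.card C := by
  let h : g.range →* B := (QuotientGroup.quotientKerEquivOfSurjective f hf).toMonoidHom.comp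
    ((QuotientGroup.map g.ker f.ker (MonoidHom.id A) hker).comp
      (QuotientGroup.quotientKerEquivRange g).symm.toMonoidHom)
  have hh : Function.Surjective h := by
    intro b
    obtain ⟨a, rfl⟩ := hf b
    refine ⟨⟨g a, a, rfl⟩, ?_⟩
    have : (QuotientGroup.quotientKerEquivRange g).symm ⟨g a, a, rfl⟩ = a :=
      (MulEquiv.symm_apply_eq _).2 rfl
    simp only [h, MonoidHom.comp_apply, MulEquiv.coe_toMonoidHom, this]
    rfl
  exact ⟨isCyclic_of_surjective h hh,
    (card_dvd_of_surjective h hh).trans (card_subgroup_dvd_card _)⟩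

namespace MulAction

theorem finite_of_faithfulSMul (G X : Type*) [Group G] [MulAction G X] [FaithfulSMul G X]
    [Finite X] : Finite G :=
  Finite.of_injective _ (toPerm_injective (α := G) (β := X))

variable {G X : Type*} [Group G] [MulAction G X]

theorem card_dvd_factorial [FaithfulSMul G X] [Finite X] :
    Nat.card G ∣ (Nat.card X).factorial :=
  Nat.card_perm (α := X) ▸ card_dvd_of_injective (toPermHom G X) toPerm_injective

theorem not_sq_dvd_card (hX : (Nat.card X).Prime) [FaithfulSMul G X] :
    ¬Nat.card X ^ 2 ∣ Nat.card G := by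
  have : Finite X := Nat.finite_of_card_ne_zero hX.ne_zero
  intro h
  have h' := h.trans (card_dvd_factorial (G := G) (X := X))
  rw [sq, ← Nat.mul_factorial_pred hX.ne_zero, Nat.mul_dvd_mul_iff_left hX.pos,
    hX.dvd_factorial] at h'
  have := hX.pos
  omega

theorem dvd_card_of_isPretransitive [IsPretransitive G X] [Nonempty X] :
    Nat.card X ∣ Nat.card G :=
  index_stabilizer_of_transitive G (Classical.arbitrary X) ▸ index_dvd_card _

theorem eq_one_of_forall_smul_eq [FaithfulSMul G X] {g : G} (hg : ∀ x : X, g • x = x) : g = 1 :=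
  eq_of_smul_eq_smul fun x => by rw [hg, one_smul]

theorem isPretransitive_of_normal (hX : (Nat.card X).Prime) [IsPretransitive G X]
    [FaithfulSMul G X] {N : Subgroup G} [N.Normal] (hN : N ≠ ⊥) : IsPretransitive N X := by
  have := IsPreprimitive.of_prime_card (G := G) hX
  refine IsQuasiPreprimitive.isPretransitive_of_normal fun hfix => hN ?_
  refine (eq_bot_iff_forall N).2 fun n hn => eq_one_of_forall_smul_eq (X := X) fun x => ?_
  exact (Set.eq_univ_iff_forall.1 hfix x : x ∈ fixedPoints N X) ⟨n, hn⟩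

theorem isPretransitive_of_card_eq (hX : (Nat.card X).Prime) [FaithfulSMul G X]
    (hG : Nat.card G = Nat.card X) : IsPretransitive G X := by
  have : Finite X := Nat.finite_of_card_ne_zero hX.ne_zero
  have : Finite G := Nat.finite_of_card_ne_zero (hG ▸ hX.ne_zero)
  have : Nontrivial G := Finite.one_lt_card_iff_nontrivial.1 (hG ▸ hX.one_lt)
  obtain ⟨g, hg⟩ := exists_ne (1 : G)
  obtain ⟨x, hx⟩ : ∃ x : X, g • x ≠ x := by
    by_contra! h
    exact hg (eq_one_of_forall_smul_eq h)
  have horbit : (orbit G x).ncard ∣ Nat.card X := hG ▸ index_stabilizer G x ▸ index_dvd_card _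
  have hnontriv : 1 < (orbit G x).ncard :=
    (Set.one_lt_ncard_iff (Set.toFinite _)).2 ⟨g • x, x, mem_orbit x g, mem_orbit_self x, hx⟩
  rw [isPretransitive_iff_orbit_eq_univ x]
  refine Set.eq_of_subset_of_ncard_le (Set.subset_univ _) ?_
  rw [Set.ncard_univ, (hX.eq_one_or_self_of_dvd _ horbit).resolve_left hnontriv.ne']

open scoped IsMulCommutative in
theorem centralizer_le_of_isPretransitive [FaithfulSMul G X] [Nonempty X] {K : Subgroup G}
    [IsMulCommutative K] [IsPretransitive K X] : centralizer K ≤ K := by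
  intro g hg
  obtain ⟨x⟩ := ‹Nonempty X›
  obtain ⟨k, hk⟩ := exists_smul_eq K x (g • x)
  suffices g = k from this ▸ k.2
  refine eq_of_smul_eq_smul (α := X) fun y => ?_
  obtain ⟨k', rfl⟩ := exists_smul_eq K x y
  calc g • k' • x = k' • g • x := by
        simp only [Subgroup.smul_def, ← mul_smul, (mem_centralizer_iff.1 hg k' k'.2)]
    _ = k' • k • x := by rw [← hk]
    _ = k • k' • x := by rw [← mul_smul, ← mul_smul, mul_comm]

section PrimeDegree

variable [FaithfulSMul G X] [IsPretransitive G X]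

theorem le_of_isPGroup_of_normal (hX : (Nat.card X).Prime) {P N : Subgroup G} [N.Normal]
    (hP : IsPGroup (Nat.card X) P) (hN : N ≠ ⊥) : P ≤ N := by
  have : Fact (Nat.card X).Prime := ⟨hX⟩
  have : Finite X := Nat.finite_of_card_ne_zero hX.ne_zero
  have : Finite G := finite_of_faithfulSMul G X
  have : Nonempty X := (Nat.card_pos_iff.1 hX.pos).1
  have := isPretransitive_of_normal hX hN
  refine le_of_isPGroup_of_not_dvd_index hP fun hdvd => not_sq_dvd_card (G := G) hX ?_
  rw [← N.card_mul_index, sq]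
  exact mul_dvd_mul (dvd_card_of_isPretransitive (X := X)) hdvd

theorem closure_pow_eq_one_le_of_normal (hX : (Nat.card X).Prime) {N : Subgroup G} [N.Normal]
    (hN : N ≠ ⊥) : closure {g : G | g ^ Nat.card X = 1} ≤ N := by
  refine (closure_le N).2 fun g hg => le_of_isPGroup_of_normal hX ?_ hN (mem_zpowers g)
  refine IsPGroup.of_card_dvd_pow (n := 1) ?_
  rw [Nat.card_zpowers, pow_one]
  exact orderOf_dvd_of_pow_eq_one hg

theorem closure_pow_eq_one_ne_bot (hX : (Nat.card X).Prime) :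
    closure {g : G | g ^ Nat.card X = 1} ≠ ⊥ := by
  have : Fact (Nat.card X).Prime := ⟨hX⟩
  have : Finite X := Nat.finite_of_card_ne_zero hX.ne_zero
  have : Finite G := finite_of_faithfulSMul G X
  have : Nonempty X := (Nat.card_pos_iff.1 hX.pos).1
  obtain ⟨g, hg⟩ :=
    exists_prime_orderOf_dvd_card' (Nat.card X) (dvd_card_of_isPretransitive (G := G) (X := X))
  refine ne_bot_iff_exists_ne_one.2
    ⟨⟨g, subset_closure (hg ▸ pow_orderOf_eq_one g)⟩, fun h => ?_⟩
  rw [show g = 1 from congrArg Subtype.val h, orderOf_one] at hg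
  exact hX.one_lt.ne hg

theorem isSimpleGroup_closure_pow_eq_one (hX : (Nat.card X).Prime) :
    IsSimpleGroup (closure {g : G | g ^ Nat.card X = 1}) := by
  set T := closure {g : G | g ^ Nat.card X = 1}
  have hT : T ≠ ⊥ := closure_pow_eq_one_ne_bot hX
  have : Nontrivial T := (nontrivial_iff_ne_bot T).2 hT
  have := isPretransitive_of_normal hX hT
  refine ⟨fun H _ => or_iff_not_imp_left.2 fun hH => eq_top_iff.2 fun t _ => ?_⟩
  have hle : T ≤ H.map T.subtype := (closure_le _).2 fun g hg =>
    ⟨⟨g, subset_closure hg⟩, closure_pow_eq_one_le_of_normal hX hH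
      (subset_closure (Subtype.ext hg)), rfl⟩
  obtain ⟨t', ht', heq⟩ := hle t.2
  exact Subtype.ext heq ▸ ht'

theorem isCyclic_quotient_closure_pow_eq_one (hX : (Nat.card X).Prime) :
    IsCyclic (G ⧸ closure {g : G | g ^ Nat.card X = 1}) ∧
      Nat.card (G ⧸ closure {g : G | g ^ Nat.card X = 1}) ∣ Nat.card X - 1 := by
  set T := closure {g : G | g ^ Nat.card X = 1}
  have : Fact (Nat.card X).Prime := ⟨hX⟩
  have : Finite X := Nat.finite_of_card_ne_zero hX.ne_zero
  have : Finite G := finite_of_faithfulSMul G X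
  have : Nonempty X := (Nat.card_pos_iff.1 hX.pos).1
  obtain ⟨S⟩ : Nonempty (Sylow (Nat.card X) G) := inferInstance
  have hS : Nat.card S = Nat.card X :=
    S.card_eq_of_not_sq_dvd (dvd_card_of_isPretransitive (X := X)) (not_sq_dvd_card hX)
  have hST : (S : Subgroup G) ≤ T :=
    le_of_isPGroup_of_normal hX S.isPGroup' (closure_pow_eq_one_ne_bot hX)
  have : IsCyclic S := isCyclic_of_prime_card hS
  have : IsPretransitive S X := isPretransitive_of_card_eq hX hS
  have := isCyclic_mulAut_of_prime_card (hS ▸ hX)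
  have hker : (S : Subgroup G).normalizerMonoidHom.ker ≤
      ((QuotientGroup.mk' T).comp (normalizer (S : Set G)).subtype).ker := by
    rw [normalizerMonoidHom_ker]
    intro n hn
    exact (QuotientGroup.eq_one_iff _).2
      (hST (centralizer_le_of_isPretransitive (X := X) (mem_subgroupOf.1 hn)))
  obtain ⟨hcyc, hdvd⟩ := MonoidHom.isCyclic_and_card_dvd_of_ker_le
    (surjective_mk'_comp_subtype_of_sup_eq_top (S.normalizer_sup_eq_top' hST)) hker
  rw [IsCyclic.card_mulAut, hS, Nat.totient_prime hX] at hdvd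
  exact ⟨hcyc, hdvd⟩

end PrimeDegree

end MulAction

theorem transitive_group_of_prime_degree_structure (p : ℕ) (hp : p.Prime)
    (G : Subgroup (Equiv.Perm (Fin p)))
    (htrans : ∀ x y : Fin p, ∃ g ∈ G, g x = y) :
    ∃ (T : Subgroup G) (hT : T.Normal),
      T ≠ ⊥ ∧
      (∀ N : Subgroup G, N.Normal → N ≠ ⊥ → T ≤ N) ∧
      IsSimpleGroup T ∧
      (∀ x y : Fin p, ∃ t ∈ T, ((t : G) : Equiv.Perm (Fin p)) x = y) ∧
      (letI := hT
       IsCyclic (G ⧸ T) ∧ Nat.card (G ⧸ T) ∣ (p - 1)) := by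
  have : IsPretransitive G (Fin p) :=
    ⟨fun x y => let ⟨g, hg, hgxy⟩ := htrans x y; ⟨⟨g, hg⟩, hgxy⟩⟩
  have hX : (Nat.card (Fin p)).Prime := by rwa [Nat.card_fin]
  have hT : closure {g : G | g ^ Nat.card (Fin p) = 1} ≠ ⊥ := closure_pow_eq_one_ne_bot hX
  have := isPretransitive_of_normal hX hT
  refine ⟨_, inferInstance, hT, fun N _ hN => closure_pow_eq_one_le_of_normal hX hN,
    isSimpleGroup_closure_pow_eq_one hX, fun x y => ?_, ?_⟩
  · obtain ⟨t, ht⟩ := exists_smul_eq (closure {g : G | g ^ Nat.card (Fin p) = 1}) x y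
    exact ⟨t, t.2, ht⟩
  · simpa only [Nat.card_fin] using isCyclic_quotient_closure_pow_eq_one (G := G) hX
end
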